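/- If G is a connected graph of order n ≥ 3 with Γ_t(G) < n − 1, then d_0(G) ≤ min{n − 1, Γ_t(G) + γ_t(G)}, where d_0(G) is the least ℓ such that D_k^t(G) is connected for all k ≥ ℓ. -/

import Mathlib

open Finset

variable {V : Type*} [Fintype V] [DecidableEq V]

def IsTDS (G : SimpleGraph V) (S : Finset V) : Prop :=
  ∀ v : V, ∃ s ∈ S, G.Adj v s

def IsMTDS (G : SimpleGraph V) (S : Finset V) : Prop :=
  IsTDS G S ∧ ∀ T : Finset V, T ⊂ S → ¬ IsTDS G T

/-- The `k`-total dominating graph: vertices are total dominating sets of size at most `k`,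
adjacent iff they differ by adding or deleting one vertex. -/
def TDGraph (G : SimpleGraph V) (k : ℕ) :
    SimpleGraph {S : Finset V // IsTDS G S ∧ S.card ≤ k} :=
  SimpleGraph.fromRel (fun A B => A.1 ⊆ B.1 ∧ B.1.card = A.1.card + 1)

/-- The total domination number. -/
noncomputable def gammaT (G : SimpleGraph V) : ℕ :=
  sInf {k | ∃ S : Finset V, IsTDS G S ∧ S.card = k}

/-- The upper total domination number. -/
noncomputable def GammaT (G : SimpleGraph V) : ℕ :=
  sSup {k | ∃ S : Finset V, IsMTDS G S ∧ S.card = k}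

/-- `d₀ G` is the least `ℓ` such that `TDGraph G k` is connected for all `k ≥ ℓ`. -/
noncomputable def d0 (G : SimpleGraph V) : ℕ :=
  sInf {ℓ | ∀ k, ℓ ≤ k → (TDGraph G k).Connected}

section Aux

variable {G : SimpleGraph V}

lemma tds_mono {S T : Finset V} (hS : IsTDS G S) (hST : S ⊆ T) : IsTDS G T := fun v =>
  let ⟨s, hs, h⟩ := hS v
  ⟨s, hST hs, h⟩

lemma exists_mtds_subset : ∀ S : Finset V, IsTDS G S → ∃ A, A ⊆ S ∧ IsMTDS G A := by
  intro S
  induction S using Finset.strongInductionOn with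
  | _ S ih =>
    intro hS
    by_cases h : ∀ T, T ⊂ S → ¬ IsTDS G T
    · exact ⟨S, Finset.Subset.refl S, hS, h⟩
    · push_neg at h
      obtain ⟨T, hTS, hT⟩ := h
      obtain ⟨A, hAT, hA⟩ := ih T hTS hT
      exact ⟨A, hAT.trans hTS.subset, hA⟩

lemma tdgraph_adj {k : ℕ} {a b : {S : Finset V // IsTDS G S ∧ S.card ≤ k}}
    (h : a.1 ⊆ b.1) (hc : b.1.card = a.1.card + 1) : (TDGraph G k).Adj a b := by
  have hne : a ≠ b := by
    intro he; rw [he] at hc; omega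
  exact (SimpleGraph.fromRel_adj _ _ _).mpr ⟨hne, Or.inl ⟨h, hc⟩⟩

lemma reach_of_subset_aux {k : ℕ} :
    ∀ n : ℕ, ∀ a b : {S : Finset V // IsTDS G S ∧ S.card ≤ k},
      b.1.card ≤ a.1.card + n → a.1 ⊆ b.1 → (TDGraph G k).Reachable a b := by
  intro n
  induction n with
  | zero =>
    intro a b hc hs
    have he : a = b := Subtype.ext (Finset.eq_of_subset_of_card_le hs (by omega))
    rw [he]
  | succ n ih =>
    intro a b hc hs
    by_cases he : a.1 = b.1
    · rw [Subtype.ext he]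
    · have hss : a.1 ⊂ b.1 := ssubset_of_subset_of_ne hs he
      obtain ⟨x, hxb, hxa⟩ := Finset.exists_of_ssubset hss
      have hcx : (insert x a.1).card = a.1.card + 1 := Finset.card_insert_of_notMem hxa
      have hsub : insert x a.1 ⊆ b.1 := Finset.insert_subset hxb hs
      have hck : (insert x a.1).card ≤ k := le_trans (Finset.card_le_card hsub) b.2.2
      have hadj : (TDGraph G k).Adj a
          ⟨insert x a.1, tds_mono a.2.1 (Finset.subset_insert x a.1), hck⟩ :=
        tdgraph_adj (Finset.subset_insert x a.1) hcx
      exact hadj.reachable.trans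
        (ih ⟨insert x a.1, tds_mono a.2.1 (Finset.subset_insert x a.1), hck⟩ b
          (by simp only [hcx]; omega) hsub)

lemma reach_of_subset {k : ℕ} (a b : {S : Finset V // IsTDS G S ∧ S.card ≤ k})
    (h : a.1 ⊆ b.1) : (TDGraph G k).Reachable a b :=
  reach_of_subset_aux b.1.card a b (Nat.le_add_left _ _) h

lemma gammaT_exists (hu : IsTDS G (univ : Finset V)) :
    ∃ D : Finset V, IsTDS G D ∧ D.card = gammaT G := by
  have h := Nat.sInf_mem (s := {k | ∃ S : Finset V, IsTDS G S ∧ S.card = k})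
    ⟨_, (univ : Finset V), hu, rfl⟩
  obtain ⟨S, hS, hc⟩ := h
  exact ⟨S, hS, hc⟩

lemma gammaT_le {S : Finset V} (hS : IsTDS G S) : gammaT G ≤ S.card :=
  Nat.sInf_le ⟨S, hS, rfl⟩

lemma card_le_GammaT {A : Finset V} (hA : IsMTDS G A) : A.card ≤ GammaT G :=
  le_csSup ⟨Fintype.card V, fun k ⟨S, _, hk⟩ => hk ▸ S.card_le_univ⟩ ⟨A, hA, rfl⟩

lemma exists_adj_of_connected (hG : G.Connected) (hn : 2 ≤ Fintype.card V) (v : V) :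
    ∃ w, G.Adj v w := by
  obtain ⟨u, hu⟩ := Fintype.exists_ne_of_one_lt_card (by omega) v
  obtain ⟨p⟩ := hG.preconnected v u
  cases p with
  | nil => exact absurd rfl hu
  | cons h _ => exact ⟨_, h⟩

lemma blocked_wit {A D : Finset V} (hA : IsTDS G A) (hD : IsTDS G D)
    {x y : V} (hx : x ∉ A) (hy : y ∉ D)
    (hb : ¬ IsTDS G (univ \ {x, y})) :
    ∃ z, G.Adj z x ∧ G.Adj z y ∧ ∀ u, G.Adj z u → u = x ∨ u = y := by
  rw [IsTDS] at hb; push_neg at hb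
  obtain ⟨z, hz⟩ := hb
  have hnb : ∀ u, G.Adj z u → u = x ∨ u = y := by
    intro u hu
    by_contra hc
    push_neg at hc
    exact hz u (mem_sdiff.mpr ⟨mem_univ u, by
      simp only [Finset.mem_insert, Finset.mem_singleton]
      push_neg
      exact hc⟩) hu
  obtain ⟨s, hsA, hs⟩ := hA z
  obtain ⟨t, htD, ht⟩ := hD z
  have hsy : s = y := by
    rcases hnb s hs with rfl | rfl
    · exact absurd hsA hx
    · rfl
  have htx : t = x := by
    rcases hnb t ht with rfl | rfl
    · rfl
    · exact absurd htD hy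
  exact ⟨z, htx ▸ ht, hsy ▸ hs, hnb⟩

lemma blocked_contra {A D : Finset V} (hA : IsMTDS G A) (hD : IsTDS G D)
    (hcov : A ∪ D = univ) (hAc : 1 < (univ \ A).card) (hDc : 1 < (univ \ D).card)
    (hwit : ∀ x, x ∉ A → ∀ y, y ∉ D → ∃ z, G.Adj z x ∧ G.Adj z y ∧
      ∀ u, G.Adj z u → u = x ∨ u = y) : False := by
  have hmemD : ∀ x, x ∉ A → x ∈ D := by
    intro x hx
    have hm : x ∈ A ∪ D := hcov ▸ mem_univ x
    rcases mem_union.mp hm with h | h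
    · exact absurd h hx
    · exact h
  have hmemA : ∀ y, y ∉ D → y ∈ A := by
    intro y hy
    have hm : y ∈ A ∪ D := hcov ▸ mem_univ y
    rcases mem_union.mp hm with h | h
    · exact h
    · exact absurd h hy
  have claimA : ∀ x, x ∉ A → ∀ y, y ∉ D → ∀ c, G.Adj c x → G.Adj c y →
      (∀ u, G.Adj c u → u = x ∨ u = y) → c ∈ A := by
    intro x hx y hy c hcx hcy hcnb
    by_contra hc
    obtain ⟨y', hy'mem, hy'ne⟩ := Finset.exists_mem_ne hDc y
    have hy'D : y' ∉ D := (mem_sdiff.mp hy'mem).2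
    obtain ⟨u, huc, huy', hunb⟩ := hwit c hc y' hy'D
    obtain ⟨v, hvc, hvy, hvnb⟩ := hwit c hc y hy
    have hvx' : v = x := by
      rcases hcnb v hvc.symm with h | h
      · exact h
      · exact absurd (h ▸ hvy) (G.loopless.irrefl y)
    rcases hcnb u huc.symm with hu | hu
    · -- u = x
      have hxy : G.Adj u y := by rw [hu, ← hvx']; exact hvy
      rcases hunb y hxy with h | h
      · exact absurd (h ▸ hcy) (G.loopless.irrefl c)
      · exact hy'ne h.symm
    · -- u = y
      have hyv : G.Adj u v := by rw [hu]; exact hvy.symm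
      rcases hunb v hyv with h | h
      · exact absurd (h ▸ hvc) (G.loopless.irrefl c)
      · refine hy'D ?_
        rw [← h, hvx']
        exact hmemD x hx
  obtain ⟨x1, hx1m, x2, hx2m, hx12⟩ := Finset.one_lt_card.mp hAc
  obtain ⟨y1, hy1m, y2, hy2m, hy12⟩ := Finset.one_lt_card.mp hDc
  have hx1 : x1 ∉ A := (mem_sdiff.mp hx1m).2
  have hx2 : x2 ∉ A := (mem_sdiff.mp hx2m).2
  have hy1 : y1 ∉ D := (mem_sdiff.mp hy1m).2
  have hy2 : y2 ∉ D := (mem_sdiff.mp hy2m).2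
  obtain ⟨a, hax, hay, hanb⟩ := hwit x1 hx1 y1 hy1
  have haA : a ∈ A := claimA x1 hx1 y1 hy1 a hax hay hanb
  have hnotds : ¬ IsTDS G (A.erase a) := hA.2 _ (Finset.erase_ssubset haA)
  rw [IsTDS] at hnotds; push_neg at hnotds
  obtain ⟨z, hz⟩ := hnotds
  obtain ⟨s, hsA, hzs⟩ := hA.1 z
  have hsa : s = a := by
    by_contra hne
    exact hz s (Finset.mem_erase.mpr ⟨hne, hsA⟩) hzs
  rw [hsa] at hzs
  rcases hanb z hzs.symm with hz1 | hz1
  · -- z = x1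
    obtain ⟨b, hbx, hby, hbnb⟩ := hwit x1 hx1 y2 hy2
    have hbA : b ∈ A := claimA x1 hx1 y2 hy2 b hbx hby hbnb
    have hba : b = a := by
      by_contra hne
      refine hz b (Finset.mem_erase.mpr ⟨hne, hbA⟩) ?_
      rw [hz1]
      exact hbx.symm
    rcases hanb y2 (hba ▸ hby) with h | h
    · refine hy2 ?_
      rw [h]
      exact hmemD x1 hx1
    · exact hy12 h.symm
  · -- z = y1
    obtain ⟨b, hbx, hby, hbnb⟩ := hwit x2 hx2 y1 hy1
    have hbA : b ∈ A := claimA x2 hx2 y1 hy1 b hbx hby hbnb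
    have hba : b = a := by
      by_contra hne
      refine hz b (Finset.mem_erase.mpr ⟨hne, hbA⟩) ?_
      rw [hz1]
      exact hby.symm
    rcases hanb x2 (hba ▸ hbx) with h | h
    · exact hx12 h.symm
    · refine hx2 ?_
      rw [h]
      exact hmemA y1 hy1

lemma tdg_connected (G : SimpleGraph V) (hG : G.Connected) (hn : 3 ≤ Fintype.card V)
    (h : GammaT G < Fintype.card V - 1) (k : ℕ)
    (hk : min (Fintype.card V - 1) (GammaT G + gammaT G) ≤ k) :
    (TDGraph G k).Connected := by
  have huniv : IsTDS G (univ : Finset V) := by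
    intro v
    obtain ⟨w, hw⟩ := exists_adj_of_connected hG (by omega) v
    exact ⟨w, mem_univ w, hw⟩
  obtain ⟨D, hD, hDcard⟩ := gammaT_exists huniv
  have hDm : IsMTDS G D := ⟨hD, fun T hT hTtds => by
    have h1 := gammaT_le hTtds
    have h2 := Finset.card_lt_card hT
    omega⟩
  have hgam_le : gammaT G ≤ GammaT G := hDcard ▸ card_le_GammaT hDm
  have hcardV : (univ : Finset V).card = Fintype.card V := Finset.card_univ
  have hDk : D.card ≤ k := by omega
  have key : ∀ a, (TDGraph G k).Reachable a ⟨D, hD, hDk⟩ := by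
    intro a
    obtain ⟨A, hAsub, hAm⟩ := exists_mtds_subset a.1 a.2.1
    have hAG : A.card ≤ GammaT G := card_le_GammaT hAm
    have hAk : A.card ≤ k := by omega
    refine (reach_of_subset ⟨A, hAm.1, hAk⟩ a hAsub).symm.trans ?_
    rcases le_or_gt (GammaT G + gammaT G) k with hk1 | hk2
    · -- go through A ∪ D
      have hUk : (A ∪ D).card ≤ k := le_trans (Finset.card_union_le A D) (by omega)
      exact (reach_of_subset ⟨A, hAm.1, hAk⟩
          ⟨A ∪ D, tds_mono hD Finset.subset_union_right, hUk⟩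
          Finset.subset_union_left).trans
        (reach_of_subset ⟨D, hD, hDk⟩ ⟨A ∪ D, tds_mono hD Finset.subset_union_right, hUk⟩
          Finset.subset_union_right).symm
    · -- here n - 1 ≤ k
      have hk1 : Fintype.card V - 1 ≤ k := by omega
      by_cases hcov : A ∪ D = univ
      · by_cases hbl : ∀ x ∈ univ \ A, ∀ y ∈ univ \ D, ¬ IsTDS G (univ \ {x, y})
        · exfalso
          refine blocked_contra hAm hD hcov ?_ ?_ ?_
          · rw [Finset.card_sdiff_of_subset (Finset.subset_univ A)]; omega
          · rw [Finset.card_sdiff_of_subset (Finset.subset_univ D)]; omega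
          · intro x hx y hy
            exact blocked_wit hAm.1 hD hx hy
              (hbl x (mem_sdiff.mpr ⟨mem_univ x, hx⟩) y (mem_sdiff.mpr ⟨mem_univ y, hy⟩))
        · push_neg at hbl
          obtain ⟨x, hxm, y, hym, htds⟩ := hbl
          have hx : x ∉ A := (mem_sdiff.mp hxm).2
          have hy : y ∉ D := (mem_sdiff.mp hym).2
          have hAx : A ⊆ univ \ {x} := by
            intro t ht
            exact mem_sdiff.mpr ⟨mem_univ t, by
              simp only [Finset.mem_singleton]
              rintro rfl; exact hx ht⟩
          have hDy : D ⊆ univ \ {y} := by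
            intro t ht
            exact mem_sdiff.mpr ⟨mem_univ t, by
              simp only [Finset.mem_singleton]
              rintro rfl; exact hy ht⟩
          have h2x : univ \ {x, y} ⊆ univ \ {x} :=
            Finset.sdiff_subset_sdiff (Finset.Subset.refl _)
              (Finset.singleton_subset_iff.mpr (Finset.mem_insert_self x {y}))
          have h2y : univ \ {x, y} ⊆ univ \ {y} :=
            Finset.sdiff_subset_sdiff (Finset.Subset.refl _)
              (Finset.singleton_subset_iff.mpr (Finset.mem_insert_of_mem (Finset.mem_singleton_self y)))
          have hcx : (univ \ {x} : Finset V).card ≤ k := by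
            rw [Finset.card_sdiff_of_subset (Finset.subset_univ _), Finset.card_singleton]; omega
          have hcy : (univ \ {y} : Finset V).card ≤ k := by
            rw [Finset.card_sdiff_of_subset (Finset.subset_univ _), Finset.card_singleton]; omega
          have hcxy : (univ \ {x, y} : Finset V).card ≤ k :=
            le_trans (Finset.card_le_card h2x) hcx
          refine (reach_of_subset ⟨A, hAm.1, hAk⟩ ⟨univ \ {x}, tds_mono hAm.1 hAx, hcx⟩ hAx).trans
            (((reach_of_subset ⟨univ \ {x, y}, htds, hcxy⟩ ⟨univ \ {x}, tds_mono hAm.1 hAx, hcx⟩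
              h2x).symm).trans
              ((reach_of_subset ⟨univ \ {x, y}, htds, hcxy⟩ ⟨univ \ {y}, tds_mono hD hDy, hcy⟩
                h2y).trans
                (reach_of_subset ⟨D, hD, hDk⟩ ⟨univ \ {y}, tds_mono hD hDy, hcy⟩ hDy).symm))
      · -- some vertex outside A ∪ D
        have hss : A ∪ D ⊂ univ := (Finset.subset_univ _).ssubset_of_ne hcov
        obtain ⟨v, _, hv⟩ := Finset.exists_of_ssubset hss
        have hvA : v ∉ A := fun hh => hv (mem_union.mpr (Or.inl hh))
        have hvD : v ∉ D := fun hh => hv (mem_union.mpr (Or.inr hh))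
        have hAv : A ⊆ univ \ {v} := by
          intro t ht
          exact mem_sdiff.mpr ⟨mem_univ t, by
            simp only [Finset.mem_singleton]
            rintro rfl; exact hvA ht⟩
        have hDv : D ⊆ univ \ {v} := by
          intro t ht
          exact mem_sdiff.mpr ⟨mem_univ t, by
            simp only [Finset.mem_singleton]
            rintro rfl; exact hvD ht⟩
        have hcv : (univ \ {v} : Finset V).card ≤ k := by
          rw [Finset.card_sdiff_of_subset (Finset.subset_univ _), Finset.card_singleton]; omega
        exact (reach_of_subset ⟨A, hAm.1, hAk⟩ ⟨univ \ {v}, tds_mono hAm.1 hAv, hcv⟩ hAv).trans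
          (reach_of_subset ⟨D, hD, hDk⟩ ⟨univ \ {v}, tds_mono hAm.1 hAv, hcv⟩ hDv).symm
  rw [SimpleGraph.connected_iff]
  exact ⟨fun a b => (key a).trans (key b).symm, ⟨⟨D, hD, hDk⟩⟩⟩

end Aux

theorem stmt_11 (G : SimpleGraph V) (hG : G.Connected) (hn : 3 ≤ Fintype.card V)
    (h : GammaT G < Fintype.card V - 1) :
    d0 G ≤ min (Fintype.card V - 1) (GammaT G + gammaT G) := by
  exact Nat.sInf_le (fun k hk => tdg_connected G hG hn h k hk)
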